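/- Kochen-Specker Theorem: Let H be a finite-dimensional complex Hilbert space with dim(H) > 2. Then there is no global valuation on H, i.e., there is no function v assigning to every self-adjoint (bounded linear) operator A on H a real number v(A) such that (1) Value-Rule: v(A) belongs to the spectrum of A, and (2) Functional Composition Principle (FUNC): for every continuous function f : ℝ → ℝ, v(f(A)) = f(v(A)), where f(A) is given by the functional calculus for the self-adjoint operator A. -/

import Mathlib

/-!
Applied to `t ↦ t²`, FUNC forces `v p ∈ {0, 1}` for every orthogonal projection `p`; applied to
polynomials in `p + 2q`, it makes `v` additive on orthogonal pairs `p, q`. The line projections of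
an orthonormal basis add up to `1`, so some basis vector has value `1`, and the projection `E` onto
the span of an orthonormal triple `f` containing it has value `1`. For every orthogonal triple of
nonzero integer vectors `p, q, r`, the vectors `∑ pᵢ fᵢ`, `∑ qᵢ fᵢ`, `∑ rᵢ fᵢ` form an orthogonal
basis of the same span, so their line projections also add up to `E` and exactly one of them has
value `1`. This is a Kochen–Specker coloring of `ℤ³`, and a fixed set of 37 integer orthogonal
triples admits none.
-/

open scoped InnerProductSpace
open Submodule Matrix

theorem IsStarProjection.sum {R ι : Type*} [NonUnitalNonAssocSemiring R] [StarRing R]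
    {P : ι → R} {s : Finset ι} (hP : ∀ i ∈ s, IsStarProjection (P i))
    (horth : (s : Set ι).Pairwise fun i j => P i * P j = 0) :
    IsStarProjection (∑ i ∈ s, P i) := by
  classical
  induction s using Finset.induction_on with
  | empty => simp [IsStarProjection.zero]
  | insert a s ha ih =>
    rw [Finset.coe_insert, Set.pairwise_insert_of_notMem (Finset.mem_coe.not.mpr ha)] at horth
    rw [Finset.sum_insert ha]
    refine (hP a (s.mem_insert_self a)).add
      (ih (fun i hi => hP i (s.mem_insert_of_mem hi)) horth.1) ?_
    rw [Finset.mul_sum]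
    exact Finset.sum_eq_zero fun i hi => (horth.2 i hi).1

section Valuation

variable {A : Type*} [TopologicalSpace A] [Ring A] [StarRing A] [Algebra ℝ A]
  [ContinuousFunctionalCalculus ℝ A IsSelfAdjoint]

def CommutesWithCFC (v : A → ℝ) : Prop :=
  ∀ a : A, IsSelfAdjoint a → ∀ f : ℝ → ℝ, Continuous f → v (cfc f a) = f (v a)

namespace CommutesWithCFC

variable {v : A → ℝ} (hv : CommutesWithCFC v)
include hv

theorem map_one : v 1 = 1 := by
  simpa using hv 0 (.zero _) (fun _ => 1) continuous_const

theorem map_zero : v 0 = 0 := by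
  simpa using hv 0 (.zero _) (fun _ => 0) continuous_const

theorem eq_zero_or_one {p : A} (hp : IsStarProjection p) : v p = 0 ∨ v p = 1 := by
  have h := hv p hp.isSelfAdjoint (fun t => t * t) (by fun_prop)
  rw [cfc_mul _ _ p, cfc_id' ℝ p, hp.isIdempotentElem.eq] at h
  rcases mul_eq_zero.mp (show v p * (v p - 1) = 0 by linear_combination -h) with h0 | h1
  · exact .inl h0
  · exact .inr (sub_eq_zero.mp h1)

theorem nonneg {p : A} (hp : IsStarProjection p) : 0 ≤ v p := by
  rcases hv.eq_zero_or_one hp with h | h <;> simp [h]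

theorem map_cfc_add {a : A} (ha : IsSelfAdjoint a) {f g : ℝ → ℝ} (hf : Continuous f)
    (hg : Continuous g) : v (cfc f a + cfc g a) = v (cfc f a) + v (cfc g a) := by
  rw [← cfc_add a f g, hv a ha (fun x => f x + g x) (hf.add hg), hv a ha f hf, hv a ha g hg]

/-- `p` and `q` are both polynomials in the self-adjoint element `p + 2q`. -/
theorem map_add {p q : A} (hp : IsStarProjection p) (hq : IsStarProjection q)
    (hpq : p * q = 0) : v (p + q) = v p + v q := by
  have hqp : q * p = 0 := by
    simpa [hp.isSelfAdjoint.star_eq, hq.isSelfAdjoint.star_eq] using congr(star $hpq)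
  set a := p + q + q
  have ha : IsSelfAdjoint a := (hp.isSelfAdjoint.add hq.isSelfAdjoint).add hq.isSelfAdjoint
  have hsq : a * a = p + q + q + q + q := by
    simp only [a, add_mul, mul_add, hp.isIdempotentElem.eq, hq.isIdempotentElem.eq, hpq, hqp]
    abel
  have hp' : cfc (fun t : ℝ => 2 * t - t * t) a = p := by
    rw [cfc_sub _ _ a, cfc_const_mul _ _ a, cfc_mul _ _ a, cfc_id' ℝ a, hsq]
    module
  have hq' : cfc (fun t : ℝ => 2⁻¹ * (t * t) - 2⁻¹ * t) a = q := by
    rw [cfc_sub _ _ a, cfc_const_mul _ _ a, cfc_const_mul _ _ a, cfc_mul _ _ a, cfc_id' ℝ a, hsq]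
    module
  rw [← hp', ← hq']
  exact hv.map_cfc_add ha (by fun_prop) (by fun_prop)

theorem map_sum {ι : Type*} {P : ι → A} {s : Finset ι} (hP : ∀ i ∈ s, IsStarProjection (P i))
    (horth : (s : Set ι).Pairwise fun i j => P i * P j = 0) :
    v (∑ i ∈ s, P i) = ∑ i ∈ s, v (P i) := by
  classical
  induction s using Finset.induction_on with
  | empty => simpa using hv.map_zero
  | insert a s ha ih =>
    rw [Finset.coe_insert, Set.pairwise_insert_of_notMem (Finset.mem_coe.not.mpr ha)] at horth
    have hPs : ∀ i ∈ s, IsStarProjection (P i) := fun i hi => hP i (s.mem_insert_of_mem hi)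
    rw [Finset.sum_insert ha, Finset.sum_insert ha, ← ih hPs horth.1]
    refine hv.map_add (hP a (s.mem_insert_self a)) (.sum hPs horth.1) ?_
    rw [Finset.mul_sum]
    exact Finset.sum_eq_zero fun i hi => (horth.2 i hi).1

end CommutesWithCFC

end Valuation

section LineProjections

variable {𝕜 E : Type*} [RCLike 𝕜] [NormedAddCommGroup E] [InnerProductSpace 𝕜 E]
  {ι : Type*} [Fintype ι]

theorem starProjection_span_singleton_mul_eq_zero {x y : E} (h : ⟪x, y⟫_𝕜 = 0) :
    (𝕜 ∙ x).starProjection * (𝕜 ∙ y).starProjection = 0 :=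
  IsOrtho.starProjection_comp_starProjection (isOrtho_span.mpr (by simpa using h))

theorem sum_starProjection_span_singleton {u : ι → E}
    [(span 𝕜 (Set.range u)).HasOrthogonalProjection] (hu : Pairwise fun i j => ⟪u i, u j⟫_𝕜 = 0) :
    ∑ i, (𝕜 ∙ u i).starProjection = (span 𝕜 (Set.range u)).starProjection := by
  classical
  ext x
  rw [_root_.sum_apply]
  set y := ∑ i, (𝕜 ∙ u i).starProjection x
  symm
  refine eq_starProjection_of_mem_of_inner_eq_zero
    (sum_mem fun i _ => span_mono (Set.singleton_subset_iff.mpr (Set.mem_range_self i))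
      (starProjection_apply_mem _ x)) fun w hw => ?_
  suffices h : ∀ j, ⟪x - y, u j⟫_𝕜 = 0 by
    have hle : span 𝕜 (Set.range u) ≤ (𝕜 ∙ (x - y))ᗮ := span_le.mpr <|
      Set.range_subset_iff.mpr fun j => mem_orthogonal_singleton_iff_inner_right.mpr (h j)
    exact mem_orthogonal_singleton_iff_inner_right.mp (hle hw)
  intro j
  have hj : ∀ i, ⟪(𝕜 ∙ u i).starProjection x, u j⟫_𝕜 =
      if i = j then ⟪(𝕜 ∙ u j).starProjection x, u j⟫_𝕜 else 0 := by
    intro i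
    split_ifs with hij
    · rw [hij]
    · obtain ⟨c, hc⟩ := mem_span_singleton.mp (starProjection_apply_mem (𝕜 ∙ u i) x)
      rw [← hc, inner_smul_left, hu hij, mul_zero]
  rw [inner_sub_left, sum_inner, Finset.sum_congr rfl fun i _ => hj i, Finset.sum_ite_eq',
    if_pos (Finset.mem_univ j), ← inner_sub_left]
  exact starProjection_inner_eq_zero _ _ (mem_span_singleton_self _)

variable [FiniteDimensional 𝕜 E]

theorem OrthonormalBasis.sum_starProjection_span_singleton (b : OrthonormalBasis ι 𝕜 E) :
    ∑ i, (𝕜 ∙ b i).starProjection = 1 := by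
  rw [_root_.sum_starProjection_span_singleton fun i j hij => b.orthonormal.inner_eq_zero hij,
    ← b.coe_toBasis, b.toBasis.span_eq, starProjection_top']

theorem sum_starProjection_span_singleton_eq_of_mem_span {u w : ι → E} (hu₀ : ∀ i, u i ≠ 0)
    (hu : Pairwise fun i j => ⟪u i, u j⟫_𝕜 = 0) (hw : Pairwise fun i j => ⟪w i, w j⟫_𝕜 = 0)
    (huw : ∀ i, u i ∈ span 𝕜 (Set.range w)) :
    ∑ i, (𝕜 ∙ u i).starProjection = ∑ i, (𝕜 ∙ w i).starProjection := by
  have hspan : span 𝕜 (Set.range u) = span 𝕜 (Set.range w) := by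
    refine eq_of_le_of_finrank_le (span_le.mpr (Set.range_subset_iff.mpr huw)) ?_
    rw [finrank_span_eq_card (linearIndependent_of_ne_zero_of_inner_eq_zero hu₀ hu)]
    exact finrank_range_le_card w
  rw [sum_starProjection_span_singleton hu, sum_starProjection_span_singleton hw, hspan]

end LineProjections

section IntCombination

variable {𝕜 E : Type*} [RCLike 𝕜] [NormedAddCommGroup E] [InnerProductSpace 𝕜 E]
  {ι : Type*} [Fintype ι] {f : ι → E}

def intCombination (f : ι → E) (p : ι → ℤ) : E := ∑ i, p i • f i

theorem intCombination_mem_span (f : ι → E) (p : ι → ℤ) :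
    intCombination f p ∈ span 𝕜 (Set.range f) :=
  sum_mem fun i _ => zsmul_mem (subset_span (Set.mem_range_self i)) _

theorem Orthonormal.inner_intCombination (hf : Orthonormal 𝕜 f) (p q : ι → ℤ) :
    ⟪intCombination f p, intCombination f q⟫_𝕜 = ((p ⬝ᵥ q : ℤ) : 𝕜) := by
  simp only [intCombination, ← Int.cast_smul_eq_zsmul 𝕜, hf.inner_sum, dotProduct]
  push_cast
  simp

theorem Orthonormal.intCombination_ne_zero (hf : Orthonormal 𝕜 f) {p : ι → ℤ} (hp : p ≠ 0) :
    intCombination f p ≠ 0 := by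
  intro h
  have := hf.inner_intCombination p p
  rw [h, inner_zero_left, eq_comm, Int.cast_eq_zero, dotProduct_self_eq_zero] at this
  exact hp this

end IntCombination

section Coloring

def IsOrthogonalTriple (p q r : Fin 3 → ℤ) : Prop :=
  p ≠ 0 ∧ q ≠ 0 ∧ r ≠ 0 ∧ p ⬝ᵥ q = 0 ∧ p ⬝ᵥ r = 0 ∧ q ⬝ᵥ r = 0

instance (p q r : Fin 3 → ℤ) : Decidable (IsOrthogonalTriple p q r) := by
  unfold IsOrthogonalTriple; infer_instance

/-- Values in `ℕ` adding up to `1` on every orthogonal triple are forced into `{0, 1}`. -/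
def IsKSColoring (c : (Fin 3 → ℤ) → ℕ) : Prop :=
  ∀ p q r, IsOrthogonalTriple p q r → c p + c q + c r = 1

def ksTriples : List ((Fin 3 → ℤ) × (Fin 3 → ℤ) × (Fin 3 → ℤ)) :=
  [(![0, 0, 1], ![0, 1, 0], ![1, 0, 0]),
    (![0, 0, 1], ![1, -2, 0], ![2, 1, 0]),
    (![0, 0, 1], ![1, -1, 0], ![1, 1, 0]),
    (![0, 0, 1], ![1, 2, 0], ![2, -1, 0]),
    (![0, 1, -2], ![0, 2, 1], ![1, 0, 0]),
    (![0, 1, -2], ![1, -2, -1], ![5, 2, 1]),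
    (![0, 1, -2], ![1, 2, 1], ![5, -2, -1]),
    (![0, 1, -1], ![0, 1, 1], ![1, 0, 0]),
    (![0, 1, -1], ![1, -1, -1], ![2, 1, 1]),
    (![0, 1, -1], ![1, 1, 1], ![2, -1, -1]),
    (![0, 1, 0], ![1, 0, -2], ![2, 0, 1]),
    (![0, 1, 0], ![1, 0, -1], ![1, 0, 1]),
    (![0, 1, 0], ![1, 0, 2], ![2, 0, -1]),
    (![0, 1, 1], ![1, -1, 1], ![2, 1, -1]),
    (![0, 1, 1], ![1, 1, -1], ![2, -1, 1]),
    (![0, 2, 1], ![1, -1, 2], ![5, 1, -2]),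
    (![0, 2, 1], ![1, 1, -2], ![5, -1, 2]),
    (![1, -5, -2], ![1, 1, -2], ![2, 0, 1]),
    (![1, -2, -5], ![1, -2, 1], ![2, 1, 0]),
    (![1, -2, -1], ![1, -2, 5], ![2, 1, 0]),
    (![1, -2, -1], ![1, 0, 1], ![1, 1, -1]),
    (![1, -2, 0], ![2, 1, -5], ![2, 1, 1]),
    (![1, -2, 1], ![1, 0, -1], ![1, 1, 1]),
    (![1, -1, -2], ![1, -1, 1], ![1, 1, 0]),
    (![1, -1, -2], ![1, 5, -2], ![2, 0, 1]),
    (![1, -1, -1], ![1, -1, 2], ![1, 1, 0]),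
    (![1, -1, -1], ![1, 0, 1], ![1, 2, -1]),
    (![1, -1, 0], ![1, 1, -2], ![1, 1, 1]),
    (![1, -1, 0], ![1, 1, -1], ![1, 1, 2]),
    (![1, -1, 1], ![1, 0, -1], ![1, 2, 1]),
    (![1, -1, 2], ![1, 5, 2], ![2, 0, -1]),
    (![1, 0, -2], ![2, -5, 1], ![2, 1, 1]),
    (![1, 0, -2], ![2, -1, 1], ![2, 5, 1]),
    (![1, 0, 2], ![2, -5, -1], ![2, 1, -1]),
    (![1, 2, -5], ![1, 2, 1], ![2, -1, 0]),
    (![1, 2, 0], ![2, -1, -5], ![2, -1, 1]),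
    (![1, 2, 0], ![2, -1, -1], ![2, -1, 5])]

theorem isOrthogonalTriple_of_mem_ksTriples :
    ∀ t ∈ ksTriples, IsOrthogonalTriple t.1 t.2.1 t.2.2 := by
  decide

theorem not_isKSColoring (c : (Fin 3 → ℤ) → ℕ) : ¬ IsKSColoring c := by
  intro hc
  have h : ∀ t ∈ ksTriples, c t.1 + c t.2.1 + c t.2.2 = 1 :=
    fun t ht => hc _ _ _ (isOrthogonalTriple_of_mem_ksTriples t ht)
  simp only [ksTriples, List.forall_mem_cons, List.not_mem_nil, IsEmpty.forall_iff,
    forall_const, and_true] at h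
  casesm* _ ∧ _
  -- After these three case splits, propagating the triple equations refutes every branch.
  rcases (c ![0, 0, 1]).eq_zero_or_pos with _ | _
  · rcases (c ![0, 1, 0]).eq_zero_or_pos with _ | _ <;>
      rcases (c ![1, -1, 0]).eq_zero_or_pos with _ | _ <;> linarith
  · rcases (c ![0, 1, -1]).eq_zero_or_pos with _ | _ <;> linarith

end Coloring

section KochenSpecker

variable {H : Type*} [NormedAddCommGroup H] [InnerProductSpace ℂ H] {v : (H →L[ℂ] H) → ℝ}

theorem CommutesWithCFC.map_sum_starProjection_span_singleton [CompleteSpace H]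
    (hv : CommutesWithCFC v) {ι : Type*} [Fintype ι] {u : ι → H}
    (hu : Pairwise fun i j => ⟪u i, u j⟫_ℂ = 0) :
    v (∑ i, (ℂ ∙ u i).starProjection) = ∑ i, v (ℂ ∙ u i).starProjection :=
  hv.map_sum (fun _ _ => isStarProjection_starProjection)
    fun _ _ _ _ hij => starProjection_span_singleton_mul_eq_zero (hu hij)

variable [FiniteDimensional ℂ H]

theorem CommutesWithCFC.exists_orthonormal_triple (hv : CommutesWithCFC v)
    (hdim : 2 < Module.finrank ℂ H) :
    ∃ f : Fin 3 → H, Orthonormal ℂ f ∧ v (∑ i, (ℂ ∙ f i).starProjection) = 1 := by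
  set b := stdOrthonormalBasis ℂ H
  have hproj : ∀ x : H, IsStarProjection (ℂ ∙ x).starProjection :=
    fun _ => isStarProjection_starProjection
  have hsum : ∑ i, v (ℂ ∙ b i).starProjection = 1 := by
    rw [← hv.map_sum_starProjection_span_singleton fun i j hij => b.orthonormal.inner_eq_zero hij,
      b.sum_starProjection_span_singleton, hv.map_one]
  obtain ⟨i₀, -, hi₀⟩ := Finset.exists_ne_zero_of_sum_ne_zero (hsum ▸ one_ne_zero)
  replace hi₀ := (hv.eq_zero_or_one (hproj (b i₀))).resolve_left hi₀
  set g : Fin 3 ↪ Fin (Module.finrank ℂ H) :=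
    (Fin.castLEEmb hdim).trans (Equiv.swap ⟨0, by omega⟩ i₀).toEmbedding
  have hg : g 0 = i₀ := Equiv.swap_apply_left (⟨0, by omega⟩ : Fin _) i₀
  have hf : Orthonormal ℂ (b ∘ g) := b.orthonormal.comp g g.injective
  refine ⟨b ∘ g, hf, ?_⟩
  have hE : IsStarProjection (∑ i, (ℂ ∙ (b ∘ g) i).starProjection) :=
    .sum (fun _ _ => hproj _)
      fun _ _ _ _ hij => starProjection_span_singleton_mul_eq_zero (hf.inner_eq_zero hij)
  have hle : 1 ≤ v (∑ i, (ℂ ∙ (b ∘ g) i).starProjection) := by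
    rw [hv.map_sum_starProjection_span_singleton fun i j hij => hf.inner_eq_zero hij]
    calc 1 = v (ℂ ∙ (b ∘ g) 0).starProjection := by rw [Function.comp_apply, hg, hi₀]
      _ ≤ _ := Finset.single_le_sum (fun i _ => hv.nonneg (hproj _)) (Finset.mem_univ 0)
  exact (hv.eq_zero_or_one hE).resolve_left (by linarith)

theorem CommutesWithCFC.sum_eq_one_of_isOrthogonalTriple (hv : CommutesWithCFC v)
    {f : Fin 3 → H} (hf : Orthonormal ℂ f) (hE : v (∑ i, (ℂ ∙ f i).starProjection) = 1)
    {p q r : Fin 3 → ℤ} (h : IsOrthogonalTriple p q r) :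
    v (ℂ ∙ intCombination f p).starProjection + v (ℂ ∙ intCombination f q).starProjection +
      v (ℂ ∙ intCombination f r).starProjection = 1 := by
  obtain ⟨hp, hq, hr, hpq, hpr, hqr⟩ := h
  set u : Fin 3 → H := ![intCombination f p, intCombination f q, intCombination f r]
  have hu₀ : ∀ i, u i ≠ 0 := by
    intro i
    fin_cases i <;> exact hf.intCombination_ne_zero ‹_›
  have hu : Pairwise fun i j => ⟪u i, u j⟫_ℂ = 0 := by
    intro i j hij
    fin_cases i <;> fin_cases j <;> simp_all [u, hf.inner_intCombination, dotProduct_comm]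
  have huf : ∑ i, (ℂ ∙ u i).starProjection = ∑ i, (ℂ ∙ f i).starProjection :=
    sum_starProjection_span_singleton_eq_of_mem_span hu₀ hu (fun i j hij => hf.inner_eq_zero hij)
      fun i => by fin_cases i <;> exact intCombination_mem_span _ _
  rwa [← huf, hv.map_sum_starProjection_span_singleton hu, Fin.sum_univ_three] at hE

theorem CommutesWithCFC.isKSColoring (hv : CommutesWithCFC v) {f : Fin 3 → H}
    (hf : Orthonormal ℂ f) (hE : v (∑ i, (ℂ ∙ f i).starProjection) = 1) :
    IsKSColoring fun p => ⌊v (ℂ ∙ intCombination f p).starProjection⌋₊ := by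
  intro p q r h
  have hfloor (x : H) : (⌊v (ℂ ∙ x).starProjection⌋₊ : ℝ) = v (ℂ ∙ x).starProjection := by
    rcases hv.eq_zero_or_one (isStarProjection_starProjection (U := ℂ ∙ x)) with h | h <;>
      simp [h]
  have := hv.sum_eq_one_of_isOrthogonalTriple hf hE h
  rw [← hfloor, ← hfloor (intCombination f q), ← hfloor (intCombination f r)] at this
  exact_mod_cast this

end KochenSpecker

/-- **Kochen–Specker theorem.**  Let `H` be a finite-dimensional complex Hilbert space
with `dim H > 2`.  Then there is no *global valuation* on `H`, i.e. no function `v`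
assigning to every self-adjoint bounded linear operator `A` on `H` a real number `v A`
such that:
1. (Value-Rule) `v A` belongs to the spectrum of `A`, and
2. (FUNC) for every continuous `f : ℝ → ℝ`, `v (f A) = f (v A)`, where `f A` is given by
   the (continuous) functional calculus for the self-adjoint operator `A`. -/
theorem kochen_specker_no_global_valuation
    {H : Type*} [NormedAddCommGroup H] [InnerProductSpace ℂ H]
    [FiniteDimensional ℂ H] (hdim : 2 < Module.finrank ℂ H) :
    ¬ ∃ v : (H →L[ℂ] H) → ℝ,
        ∀ A : H →L[ℂ] H, IsSelfAdjoint A →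
          v A ∈ spectrum ℝ A ∧
          ∀ f : ℝ → ℝ, Continuous f → v (cfc f A) = f (v A) := by
  rintro ⟨v, hv⟩
  have hfunc : CommutesWithCFC v := fun A hA => (hv A hA).2
  obtain ⟨f, hf, hE⟩ := hfunc.exists_orthonormal_triple hdim
  exact not_isKSColoring _ (hfunc.isKSColoring hf hE)
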